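/- Let Λ = (0,∞)³ and let Λ₁ = {(x,y,z) ∈ Λ : x > y+z}, Λ₂ = {(x,y,z) ∈ Λ : y > x+z}, Λ₃ = {(x,y,z) ∈ Λ : z > x+y}, Λ₄ = {(x,y,z) ∈ Λ : x < y+z, y < x+z, z < x+y}. Let Λ* = Λ₄ and, with s = α+β+γ, define Λ*₁ = {(α,β,γ) ∈ Λ* : α < s/4}, Λ*₂ = {(α,β,γ) ∈ Λ* : β < s/4}, Λ*₃ = {(α,β,γ) ∈ Λ* : γ < s/4}, Λ*₄ = {(α,β,γ) ∈ Λ* : α,β,γ > s/4}. Define F̃ : Λ × Λ → ℝ⁶ by F̃(x,y,z,α,β,γ) = (x−y−z, y, z, α, α+β, α+γ) on Λ₁ × Λ, (x, y−x−z, z, α+β, β, β+γ) on Λ₂ × Λ, (x, y, z−x−y, α+γ, β+γ, γ) on Λ₃ × Λ, and (−x+y+z, x−y+z, x+y−z, (β+γ)/2, (α+γ)/2, (α+β)/2) on Λ₄ × Λ. Then for each i ∈ {1,2,3,4}, F̃ maps Λᵢ × Λ* bijectively onto Λ × Λ*ᵢ. -/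

import Mathlib

open Set

/-- The positive cone `Λ = (0,∞)³`. -/
def posCone3 : Set (ℝ × ℝ × ℝ) := {v | 0 < v.1 ∧ 0 < v.2.1 ∧ 0 < v.2.2}

/-- `Λ₁ = {x > y + z}`. -/
def revCone1 : Set (ℝ × ℝ × ℝ) := {v ∈ posCone3 | v.2.1 + v.2.2 < v.1}
/-- `Λ₂ = {y > x + z}`. -/
def revCone2 : Set (ℝ × ℝ × ℝ) := {v ∈ posCone3 | v.1 + v.2.2 < v.2.1}
/-- `Λ₃ = {z > x + y}`. -/
def revCone3 : Set (ℝ × ℝ × ℝ) := {v ∈ posCone3 | v.1 + v.2.1 < v.2.2}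
/-- `Λ₄ = Λ*`: triples satisfying the strict triangle inequalities. -/
def revCone4 : Set (ℝ × ℝ × ℝ) :=
  {v ∈ posCone3 | v.1 < v.2.1 + v.2.2 ∧ v.2.1 < v.1 + v.2.2 ∧ v.2.2 < v.1 + v.2.1}

def revConeS1 : Set (ℝ × ℝ × ℝ) := {v ∈ revCone4 | v.1 < (v.1 + v.2.1 + v.2.2) / 4}
def revConeS2 : Set (ℝ × ℝ × ℝ) := {v ∈ revCone4 | v.2.1 < (v.1 + v.2.1 + v.2.2) / 4}
def revConeS3 : Set (ℝ × ℝ × ℝ) := {v ∈ revCone4 | v.2.2 < (v.1 + v.2.1 + v.2.2) / 4}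
def revConeS4 : Set (ℝ × ℝ × ℝ) :=
  {v ∈ revCone4 | (v.1 + v.2.1 + v.2.2) / 4 < v.1 ∧ (v.1 + v.2.1 + v.2.2) / 4 < v.2.1 ∧
                  (v.1 + v.2.1 + v.2.2) / 4 < v.2.2}

/-- The natural extension map `F̃` of the Reverse algorithm. -/
noncomputable def revExt : (ℝ × ℝ × ℝ) × (ℝ × ℝ × ℝ) → (ℝ × ℝ × ℝ) × (ℝ × ℝ × ℝ)
  | ((x, y, z), (a, b, c)) =>
    if y + z < x then ((x - y - z, y, z), (a, a + b, a + c))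
    else if x + z < y then ((x, y - x - z, z), (a + b, b, b + c))
    else if x + y < z then ((x, y, z - x - y), (a + c, b + c, c))
    else ((-x + y + z, x - y + z, x + y - z), ((b + c) / 2, (a + c) / 2, (a + b) / 2))

/-! On `Λᵢ × Λ` the map `F̃` is the product `(x, a) ↦ (Aᵢ⁻¹ x, Aᵢᵀ a)` of two linear
automorphisms of `ℝ³`, so it suffices that `Aᵢ⁻¹` maps `Λᵢ` onto `Λ` and `Aᵢᵀ` maps `Λ*` onto
`Λ*ᵢ`. For an automorphism `e` this is the pointwise equivalence `e v ∈ T ↔ v ∈ S`, which is a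
matter of linear inequalities. -/

lemma Set.BijOn.of_eq_prodMap {α β γ δ : Type*} {F : α × β → γ × δ} (e : α ≃ γ) (f : β ≃ δ)
    {s : Set α} {s' : Set β} {t : Set γ} {t' : Set δ}
    (he : ∀ a, e a ∈ t ↔ a ∈ s) (hf : ∀ b, f b ∈ t' ↔ b ∈ s')
    (hF : ∀ {a}, a ∈ s → ∀ b, F (a, b) = (e a, f b)) :
    BijOn F (s ×ˢ s') (t ×ˢ t') :=
  ((e.bijOn he).prodMap (f.bijOn hf)).congr fun p hp ↦ (hF hp.1 p.2).symm

/- `revInvMapᵢ` is `x ↦ Aᵢ⁻¹ x` and `revDualMapᵢ` is `a ↦ Aᵢᵀ a`. -/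

def revInvMap1 : ℝ × ℝ × ℝ ≃ ℝ × ℝ × ℝ where
  toFun v := (v.1 - v.2.1 - v.2.2, v.2.1, v.2.2)
  invFun v := (v.1 + v.2.1 + v.2.2, v.2.1, v.2.2)
  left_inv v := by ext <;> ring_nf
  right_inv v := by ext <;> ring_nf

def revDualMap1 : ℝ × ℝ × ℝ ≃ ℝ × ℝ × ℝ where
  toFun v := (v.1, v.1 + v.2.1, v.1 + v.2.2)
  invFun v := (v.1, v.2.1 - v.1, v.2.2 - v.1)
  left_inv v := by ext <;> ring_nf
  right_inv v := by ext <;> ring_nf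

def revInvMap2 : ℝ × ℝ × ℝ ≃ ℝ × ℝ × ℝ where
  toFun v := (v.1, v.2.1 - v.1 - v.2.2, v.2.2)
  invFun v := (v.1, v.1 + v.2.1 + v.2.2, v.2.2)
  left_inv v := by ext <;> ring_nf
  right_inv v := by ext <;> ring_nf

def revDualMap2 : ℝ × ℝ × ℝ ≃ ℝ × ℝ × ℝ where
  toFun v := (v.1 + v.2.1, v.2.1, v.2.1 + v.2.2)
  invFun v := (v.1 - v.2.1, v.2.1, v.2.2 - v.2.1)
  left_inv v := by ext <;> ring_nf
  right_inv v := by ext <;> ring_nf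

def revInvMap3 : ℝ × ℝ × ℝ ≃ ℝ × ℝ × ℝ where
  toFun v := (v.1, v.2.1, v.2.2 - v.1 - v.2.1)
  invFun v := (v.1, v.2.1, v.1 + v.2.1 + v.2.2)
  left_inv v := by ext <;> ring_nf
  right_inv v := by ext <;> ring_nf

def revDualMap3 : ℝ × ℝ × ℝ ≃ ℝ × ℝ × ℝ where
  toFun v := (v.1 + v.2.2, v.2.1 + v.2.2, v.2.2)
  invFun v := (v.1 - v.2.2, v.2.1 - v.2.2, v.2.2)
  left_inv v := by ext <;> ring_nf
  right_inv v := by ext <;> ring_nf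

noncomputable def revInvMap4 : ℝ × ℝ × ℝ ≃ ℝ × ℝ × ℝ where
  toFun v := (-v.1 + v.2.1 + v.2.2, v.1 - v.2.1 + v.2.2, v.1 + v.2.1 - v.2.2)
  invFun v := ((v.2.1 + v.2.2) / 2, (v.1 + v.2.2) / 2, (v.1 + v.2.1) / 2)
  left_inv v := by ext <;> ring_nf
  right_inv v := by ext <;> ring_nf

/- `A₄` is symmetric, so `A₄ᵀ = (A₄⁻¹)⁻¹`. -/
noncomputable def revDualMap4 : ℝ × ℝ × ℝ ≃ ℝ × ℝ × ℝ := revInvMap4.symm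

lemma revInvMap1_mem_posCone3_iff (v : ℝ × ℝ × ℝ) : revInvMap1 v ∈ posCone3 ↔ v ∈ revCone1 := by
  simp only [revInvMap1, Equiv.coe_fn_mk, posCone3, revCone1, mem_ofPred_eq]
  constructor <;> intro h <;> and_intros <;> linarith

lemma revInvMap2_mem_posCone3_iff (v : ℝ × ℝ × ℝ) : revInvMap2 v ∈ posCone3 ↔ v ∈ revCone2 := by
  simp only [revInvMap2, Equiv.coe_fn_mk, posCone3, revCone2, mem_ofPred_eq]
  constructor <;> intro h <;> and_intros <;> linarith

lemma revInvMap3_mem_posCone3_iff (v : ℝ × ℝ × ℝ) : revInvMap3 v ∈ posCone3 ↔ v ∈ revCone3 := by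
  simp only [revInvMap3, Equiv.coe_fn_mk, posCone3, revCone3, mem_ofPred_eq]
  constructor <;> intro h <;> and_intros <;> linarith

lemma revInvMap4_mem_posCone3_iff (v : ℝ × ℝ × ℝ) : revInvMap4 v ∈ posCone3 ↔ v ∈ revCone4 := by
  simp only [revInvMap4, Equiv.coe_fn_mk, posCone3, revCone4, mem_ofPred_eq]
  constructor <;> intro h <;> and_intros <;> linarith

lemma revDualMap1_mem_revConeS1_iff (v : ℝ × ℝ × ℝ) :
    revDualMap1 v ∈ revConeS1 ↔ v ∈ revCone4 := by
  simp only [revDualMap1, Equiv.coe_fn_mk, revConeS1, revCone4, posCone3, mem_ofPred_eq]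
  constructor <;> intro h <;> and_intros <;> linarith

lemma revDualMap2_mem_revConeS2_iff (v : ℝ × ℝ × ℝ) :
    revDualMap2 v ∈ revConeS2 ↔ v ∈ revCone4 := by
  simp only [revDualMap2, Equiv.coe_fn_mk, revConeS2, revCone4, posCone3, mem_ofPred_eq]
  constructor <;> intro h <;> and_intros <;> linarith

lemma revDualMap3_mem_revConeS3_iff (v : ℝ × ℝ × ℝ) :
    revDualMap3 v ∈ revConeS3 ↔ v ∈ revCone4 := by
  simp only [revDualMap3, Equiv.coe_fn_mk, revConeS3, revCone4, posCone3, mem_ofPred_eq]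
  constructor <;> intro h <;> and_intros <;> linarith

lemma revDualMap4_mem_revConeS4_iff (v : ℝ × ℝ × ℝ) :
    revDualMap4 v ∈ revConeS4 ↔ v ∈ revCone4 := by
  simp only [revDualMap4, revInvMap4, Equiv.coe_fn_symm_mk, revConeS4, revCone4, posCone3,
    mem_ofPred_eq]
  constructor <;> intro h <;> and_intros <;> linarith

lemma revExt_of_mem_revCone1 {v : ℝ × ℝ × ℝ} (hv : v ∈ revCone1) (w : ℝ × ℝ × ℝ) :
    revExt (v, w) = (revInvMap1 v, revDualMap1 w) := by
  obtain ⟨x, y, z⟩ := v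
  obtain ⟨a, b, c⟩ := w
  rw [revExt, if_pos hv.2]
  rfl

lemma revExt_of_mem_revCone2 {v : ℝ × ℝ × ℝ} (hv : v ∈ revCone2) (w : ℝ × ℝ × ℝ) :
    revExt (v, w) = (revInvMap2 v, revDualMap2 w) := by
  obtain ⟨x, y, z⟩ := v
  obtain ⟨a, b, c⟩ := w
  obtain ⟨⟨hx, -, hz⟩, h⟩ := hv
  rw [revExt, if_neg (by linarith), if_pos h]
  rfl

lemma revExt_of_mem_revCone3 {v : ℝ × ℝ × ℝ} (hv : v ∈ revCone3) (w : ℝ × ℝ × ℝ) :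
    revExt (v, w) = (revInvMap3 v, revDualMap3 w) := by
  obtain ⟨x, y, z⟩ := v
  obtain ⟨a, b, c⟩ := w
  obtain ⟨⟨hx, hy, -⟩, h⟩ := hv
  rw [revExt, if_neg (by linarith), if_neg (by linarith), if_pos h]
  rfl

lemma revExt_of_mem_revCone4 {v : ℝ × ℝ × ℝ} (hv : v ∈ revCone4) (w : ℝ × ℝ × ℝ) :
    revExt (v, w) = (revInvMap4 v, revDualMap4 w) := by
  obtain ⟨x, y, z⟩ := v
  obtain ⟨a, b, c⟩ := w
  obtain ⟨-, h₁, h₂, h₃⟩ := hv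
  rw [revExt, if_neg (by linarith), if_neg (by linarith), if_neg (by linarith)]
  rfl

/-- For each `i ∈ {1,2,3,4}`, the Reverse natural extension `F̃` maps `Λᵢ × Λ*`
bijectively onto `Λ × Λ*ᵢ`. -/
theorem stmt_5 :
    Set.BijOn revExt (revCone1 ×ˢ revCone4) (posCone3 ×ˢ revConeS1) ∧
    Set.BijOn revExt (revCone2 ×ˢ revCone4) (posCone3 ×ˢ revConeS2) ∧
    Set.BijOn revExt (revCone3 ×ˢ revCone4) (posCone3 ×ˢ revConeS3) ∧
    Set.BijOn revExt (revCone4 ×ˢ revCone4) (posCone3 ×ˢ revConeS4) :=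
  ⟨.of_eq_prodMap revInvMap1 revDualMap1 revInvMap1_mem_posCone3_iff
      revDualMap1_mem_revConeS1_iff revExt_of_mem_revCone1,
    .of_eq_prodMap revInvMap2 revDualMap2 revInvMap2_mem_posCone3_iff
      revDualMap2_mem_revConeS2_iff revExt_of_mem_revCone2,
    .of_eq_prodMap revInvMap3 revDualMap3 revInvMap3_mem_posCone3_iff
      revDualMap3_mem_revConeS3_iff revExt_of_mem_revCone3,
    .of_eq_prodMap revInvMap4 revDualMap4 revInvMap4_mem_posCone3_iff
      revDualMap4_mem_revConeS4_iff revExt_of_mem_revCone4⟩
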